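/- The Jacobian of the map φ : ℝ² → Sym(3,ℝ) at the point (2,0) is injective; in particular the partial derivatives of the entries (φ)₁₁ and (φ)₂₃ with respect to x and y form an invertible 2×2 matrix at (2,0). -/

import Mathlib

open Matrix

noncomputable def r1 (x y : ℝ) : ℝ := Real.sqrt (4 + x^2 + 4*x^2*y^2)
noncomputable def r2 (x y : ℝ) : ℝ := Real.sqrt (4 + 4*y^2 + x^2*y^2)

noncomputable def phi (x y : ℝ) : Matrix (Fin 3) (Fin 3) ℝ :=
  ((r1 x y)^2 * (r2 x y)^2)⁻¹ •
    !![(4 - x^2) * (r2 x y)^2,  2*x*(r2 x y)^3,  0;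
       2*x*(r2 x y)^3,  -4*(4 - x^2 - 4*x^2*y^4 + x^4*y^4),  2*y*(r1 x y)^3;
       0,  2*y*(r1 x y)^3,  y^2*(x^2 - 4)*(r1 x y)^2]

noncomputable def TX : Matrix (Fin 3) (Fin 3) ℝ := !![0,1,0;1,0,0;0,0,0]

noncomputable def PhiFun : ℝ × ℝ → (Fin 3 → Fin 3 → ℝ) :=
  fun p i j => phi p.1 p.2 i j

/-- The 2×2 matrix of partial derivatives of the entries (φ)₁₁ and (φ)₂₃
with respect to x and y, at the point (2,0). -/
noncomputable def Jac : Matrix (Fin 2) (Fin 2) ℝ :=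
  !![deriv (fun x => phi x 0 0 0) 2, deriv (fun y => phi 2 y 0 0) 0;
     deriv (fun x => phi x 0 1 2) 2, deriv (fun y => phi 2 y 1 2) 0]

/-!
Since `r₁, r₂ ≥ 2`, `φ` is differentiable everywhere. The columns of `Jac` are the images of
`(1, 0)` and `(0, 1)` under the derivative of `φ` at `(2, 0)`, read off in the entries `(0, 0)`
and `(1, 2)`; a nonsingular minor of this kind already makes the derivative injective.
Along `y = 0` one has `φ₁₁ = (4 - x²)/(4 + x²)` and `φ₂₃ = 0`, and along `x = 2` one has
`φ₁₁ = 0` and `φ₂₃ = 2y√(8 + 16y²)/(4 + 8y²)`, so `Jac = diag(-1/2, √8/2)`.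
-/

theorem LinearMap.injective_of_det_ne_zero {K F : Type*} [Field K] [AddCommGroup F] [Module K F]
    (D : K × K →ₗ[K] F) (f g : F →ₗ[K] K)
    (hdet : !![f (D (1, 0)), f (D (0, 1)); g (D (1, 0)), g (D (0, 1))].det ≠ 0) :
    Function.Injective D := by
  rw [← LinearMap.ker_eq_bot, LinearMap.ker_eq_bot']
  intro v hv
  have hdecomp : D v = v.1 • D (1, 0) + v.2 • D (0, 1) := by
    rw [← map_smul, ← map_smul, ← map_add]
    congr 1
    ext <;> simp
  have hker : !![f (D (1, 0)), f (D (0, 1)); g (D (1, 0)), g (D (0, 1))] *ᵥ ![v.1, v.2] = 0 := by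
    rw [hdecomp] at hv
    ext i
    fin_cases i
    · simpa [mul_comm] using congrArg f hv
    · simpa [mul_comm] using congrArg g hv
  have hv0 := Matrix.eq_zero_of_mulVec_eq_zero hdet hker
  exact Prod.ext (congrFun hv0 0) (congrFun hv0 1)

theorem HasFDerivAt.hasDerivAt_comp_prodMk_left {𝕜 E : Type*} [NontriviallyNormedField 𝕜]
    [NormedAddCommGroup E] [NormedSpace 𝕜 E] {f : 𝕜 × 𝕜 → E} {D : 𝕜 × 𝕜 →L[𝕜] E} {a b : 𝕜} (h : HasFDerivAt f D (a, b)) :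
    HasDerivAt (fun x => f (x, b)) (D (1, 0)) a :=
  h.comp_hasDerivAt (f := fun x => (x, b)) a ((hasDerivAt_id a).prodMk (hasDerivAt_const a b))

theorem HasFDerivAt.hasDerivAt_comp_prodMk_right {𝕜 E : Type*} [NontriviallyNormedField 𝕜]
    [NormedAddCommGroup E] [NormedSpace 𝕜 E] {f : 𝕜 × 𝕜 → E} {D : 𝕜 × 𝕜 →L[𝕜] E} {a b : 𝕜} (h : HasFDerivAt f D (a, b)) :
    HasDerivAt (fun y => f (a, y)) (D (0, 1)) b :=
  h.comp_hasDerivAt (f := fun y => (a, y)) b ((hasDerivAt_const b a).prodMk (hasDerivAt_id b))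

theorem r1_sq (x y : ℝ) : r1 x y ^ 2 = 4 + x ^ 2 + 4 * x ^ 2 * y ^ 2 := by
  rw [r1, Real.sq_sqrt (by positivity)]

theorem r2_sq (x y : ℝ) : r2 x y ^ 2 = 4 + 4 * y ^ 2 + x ^ 2 * y ^ 2 := by
  rw [r2, Real.sq_sqrt (by positivity)]

theorem r1_pos (x y : ℝ) : 0 < r1 x y := Real.sqrt_pos.2 (by positivity)

theorem r2_pos (x y : ℝ) : 0 < r2 x y := Real.sqrt_pos.2 (by positivity)

theorem differentiable_phiFun : Differentiable ℝ PhiFun := by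
  have hr1 : Differentiable ℝ fun p : ℝ × ℝ => r1 p.1 p.2 :=
    fun p => DifferentiableAt.sqrt (by fun_prop) (by positivity)
  have hr2 : Differentiable ℝ fun p : ℝ × ℝ => r2 p.1 p.2 :=
    fun p => DifferentiableAt.sqrt (by fun_prop) (by positivity)
  have hscale : Differentiable ℝ fun p : ℝ × ℝ => (r1 p.1 p.2 ^ 2 * r2 p.1 p.2 ^ 2)⁻¹ :=
    fun p => ((hr1.pow 2).mul (hr2.pow 2) p).inv
      (mul_pos (pow_pos (r1_pos _ _) 2) (pow_pos (r2_pos _ _) 2)).ne'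
  intro p
  rw [differentiableAt_pi]
  intro i
  rw [differentiableAt_pi]
  intro j
  fin_cases i <;> fin_cases j <;>
    simp only [PhiFun, phi, Matrix.smul_apply, Matrix.of_apply, Matrix.cons_val', Matrix.cons_val,
      Matrix.cons_val_fin_one, Fin.zero_eta, Fin.mk_one, Fin.reduceFinMk, smul_eq_mul] <;>
    exact (hscale p).mul (by fun_prop)

theorem phi_apply_zero_zero_y_zero (x : ℝ) : phi x 0 0 0 = (4 - x ^ 2) / (4 + x ^ 2) := by
  have : (4 : ℝ) + x ^ 2 ≠ 0 := by positivity
  simp only [phi, Matrix.smul_apply, Matrix.of_apply, Matrix.cons_val', Matrix.cons_val_zero,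
    Matrix.cons_val_fin_one, smul_eq_mul, r1_sq, r2_sq]
  field_simp
  ring

theorem phi_apply_one_two_y_zero (x : ℝ) : phi x 0 1 2 = 0 := by
  simp [phi]

theorem phi_apply_zero_zero_x_two (y : ℝ) : phi 2 y 0 0 = 0 := by
  norm_num [phi]

theorem phi_apply_one_two_x_two (y : ℝ) :
    phi 2 y 1 2 = 2 * y * √(8 + 16 * y ^ 2) / (4 + 8 * y ^ 2) := by
  have hr1 : r1 2 y = √(8 + 16 * y ^ 2) := by rw [r1]; ring_nf
  have hr2 : r2 2 y ^ 2 = 4 + 8 * y ^ 2 := by rw [r2_sq]; ring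
  have hne : (8 : ℝ) + 16 * y ^ 2 ≠ 0 := by positivity
  have hne' : (4 : ℝ) + 8 * y ^ 2 ≠ 0 := by positivity
  simp only [phi, Matrix.smul_apply, Matrix.of_apply, Matrix.cons_val', Matrix.cons_val,
    Matrix.cons_val_fin_one, smul_eq_mul, hr1, hr2]
  field_simp

theorem hasDerivAt_phi_apply_zero_zero_y_zero : HasDerivAt (fun x => phi x 0 0 0) (-1 / 2) 2 := by
  have hnum : HasDerivAt (fun x : ℝ => 4 - x ^ 2) (-(2 * 2)) 2 := by
    simpa using (hasDerivAt_pow 2 (2 : ℝ)).const_sub 4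
  have hden : HasDerivAt (fun x : ℝ => 4 + x ^ 2) (2 * 2) 2 := by
    simpa using (hasDerivAt_pow 2 (2 : ℝ)).const_add 4
  rw [funext phi_apply_zero_zero_y_zero]
  exact (hnum.div hden (by norm_num)).congr_deriv (by norm_num)

theorem hasDerivAt_phi_apply_one_two_x_two : HasDerivAt (fun y => phi 2 y 1 2) (√8 / 2) 0 := by
  have hroot : HasDerivAt (fun y : ℝ => √(8 + 16 * y ^ 2)) 0 0 := by
    simpa using (((hasDerivAt_pow 2 (0 : ℝ)).const_mul 16).const_add 8).sqrt (by norm_num)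
  have hden : HasDerivAt (fun y : ℝ => 4 + 8 * y ^ 2) 0 0 := by
    simpa using ((hasDerivAt_pow 2 (0 : ℝ)).const_mul 8).const_add 4
  rw [funext phi_apply_one_two_x_two]
  exact ((((hasDerivAt_id (0 : ℝ)).const_mul 2).mul hroot).div hden (by norm_num)).congr_deriv
    (by norm_num; ring)

theorem jac_eq : Jac = !![-1 / 2, 0; 0, √8 / 2] := by
  rw [Jac, hasDerivAt_phi_apply_zero_zero_y_zero.deriv, hasDerivAt_phi_apply_one_two_x_two.deriv,
    funext phi_apply_zero_zero_x_two, funext phi_apply_one_two_y_zero, deriv_const, deriv_const]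

theorem det_jac_ne_zero : Jac.det ≠ 0 := by
  rw [jac_eq, Matrix.det_fin_two_of]
  norm_num

theorem stmt_6 :
    (∃ D : ℝ × ℝ →L[ℝ] (Fin 3 → Fin 3 → ℝ),
      HasFDerivAt PhiFun D (2, 0) ∧ Function.Injective D) ∧
    Jac.det ≠ 0 := by
  set D := fderiv ℝ PhiFun (2, 0)
  have hD : HasFDerivAt PhiFun D (2, 0) := (differentiable_phiFun _).hasFDerivAt
  have hx (i j : Fin 3) : deriv (fun x => phi x 0 i j) 2 = D (1, 0) i j :=
    (hasDerivAt_pi.1 (hasDerivAt_pi.1 hD.hasDerivAt_comp_prodMk_left i) j).deriv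
  have hy (i j : Fin 3) : deriv (fun y => phi 2 y i j) 0 = D (0, 1) i j :=
    (hasDerivAt_pi.1 (hasDerivAt_pi.1 hD.hasDerivAt_comp_prodMk_right i) j).deriv
  let entry (i j : Fin 3) : (Fin 3 → Fin 3 → ℝ) →ₗ[ℝ] ℝ := LinearMap.proj j ∘ₗ LinearMap.proj i
  have hinj : Function.Injective D.toLinearMap := by
    refine D.toLinearMap.injective_of_det_ne_zero (entry 0 0) (entry 1 2) ?_
    have hdet := det_jac_ne_zero
    simp only [Jac, hx, hy] at hdet
    exact hdet
  exact ⟨⟨D, hD, hinj⟩, det_jac_ne_zero⟩
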